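/- Let A be a commutative ring, L a unit of A, and d ≥ 1 an integer. Let x be an element of the A-subalgebra 𝓡 of A[[T]] generated by the elements T^b·(T^b − L^a)^{−1} (a ∈ ℤ, b ≥ 1), and suppose (P,Q) is a lim-representation of x. Then the truncation x[d] admits a lim-representation (P₁,Q₁) such that the coefficient of T^{deg Q₁} in P₁ equals the coefficient of T^{deg Q} in P. -/

import Mathlib

open PowerSeries

/-- The `A`-subalgebra 𝓡 of `A⟦T⟧` generated by the elements `T^b * (T^b - L^a)⁻¹`
for `a ∈ ℤ`, `b ≥ 1`. -/
noncomputable def RatAlg (A : Type*) [CommRing A] (L : Aˣ) : Subalgebra A (PowerSeries A) :=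
  Algebra.adjoin A
    {x : PowerSeries A | ∃ (a : ℤ) (b : ℕ), 1 ≤ b ∧
      x = (PowerSeries.X : PowerSeries A) ^ b *
        Ring.inverse ((PowerSeries.X : PowerSeries A) ^ b -
          PowerSeries.C ((L ^ a : Aˣ) : A))}

/-- A lim-representation of a power series `x`: polynomials `P, Q` with `Q` monic,
`Q(0)` a unit, `deg P ≤ deg Q`, and `x * Q = P` in `A⟦T⟧`. Its value is
`P.coeff Q.natDegree`. -/
def IsLimRep {A : Type*} [CommRing A] (x : PowerSeries A) (P Q : Polynomial A) : Prop :=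
  Q.Monic ∧ IsUnit (Q.coeff 0) ∧ P.degree ≤ Q.degree ∧
    x * (Q : PowerSeries A) = (P : PowerSeries A)

/-- The truncation `x ↦ x[d]` keeping only the coefficients in degrees divisible by `d`. -/
noncomputable def truncDiv (A : Type*) [CommRing A] (d : ℕ) (x : PowerSeries A) :
    PowerSeries A :=
  PowerSeries.mk fun i => if d ∣ i then PowerSeries.coeff i x else 0

/-!
Every element of `RatAlg A L` has a lim-representation whose denominator is a product of
binomials `T^b - u` with `u` a unit. As `T^b - u` divides `T^(bd) - u^d`, such a denominator
divides one lying in `A[T^d]`, so `x` has a lim-representation `x * Q = P` with `Q ∈ A[T^d]`.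
Multiplication by a series in `A⟦T^d⟧` commutes with `x ↦ x[d]`, hence `x[d] * Q = P[d]`, and
`P[d]` keeps the coefficient of `T^(deg Q)` because `d ∣ deg Q`. The value does not depend on
the chosen representation: `P * Q' = P' * Q`, and comparing top coefficients of these products
with `Q, Q'` monic gives `P_(deg Q) = P'_(deg Q')`.
-/

open Polynomial

section LimRep

variable {A : Type*} [CommRing A] {x y : PowerSeries A} {P P' Q Q' : A[X]}

theorem IsLimRep.coeff_natDegree_eq (h : IsLimRep x P Q) (h' : IsLimRep x P' Q') :
    P.coeff Q.natDegree = P'.coeff Q'.natDegree := by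
  obtain ⟨hQ, -, hPQ, hx⟩ := h
  obtain ⟨hQ', -, hPQ', hx'⟩ := h'
  have hcross : P * Q' = P' * Q := by
    apply Polynomial.coe_injective (R := A)
    rw [Polynomial.coe_mul, Polynomial.coe_mul, ← hx, ← hx']
    ring
  calc P.coeff Q.natDegree
      = (P * Q').coeff (Q.natDegree + Q'.natDegree) := by
        rw [coeff_mul_add_eq_of_natDegree_le (natDegree_le_natDegree hPQ) le_rfl,
          hQ'.coeff_natDegree, mul_one]
    _ = (P' * Q).coeff (Q'.natDegree + Q.natDegree) := by rw [hcross, add_comm]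
    _ = P'.coeff Q'.natDegree := by
        rw [coeff_mul_add_eq_of_natDegree_le (natDegree_le_natDegree hPQ') le_rfl,
          hQ.coeff_natDegree, mul_one]

theorem IsLimRep.add (h : IsLimRep x P Q) (h' : IsLimRep y P' Q') :
    IsLimRep (x + y) (P * Q' + P' * Q) (Q * Q') := by
  obtain ⟨hQ, hQ0, hPQ, hx⟩ := h
  obtain ⟨hQ', hQ'0, hPQ', hy⟩ := h'
  refine ⟨hQ.mul hQ', by rw [mul_coeff_zero]; exact hQ0.mul hQ'0, ?_, ?_⟩
  · rw [hQ'.degree_mul]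
    refine (degree_add_le _ _).trans (max_le ?_ ?_)
    · exact (degree_mul_le _ _).trans (add_le_add_left hPQ _)
    · exact (degree_mul_le _ _).trans (by rw [add_comm Q.degree]; exact add_le_add_left hPQ' _)
  · simp only [Polynomial.coe_add, Polynomial.coe_mul]
    linear_combination (Q' : PowerSeries A) * hx + (Q : PowerSeries A) * hy

theorem IsLimRep.mul (h : IsLimRep x P Q) (h' : IsLimRep y P' Q') :
    IsLimRep (x * y) (P * P') (Q * Q') := by
  obtain ⟨hQ, hQ0, hPQ, hx⟩ := h
  obtain ⟨hQ', hQ'0, hPQ', hy⟩ := h'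
  refine ⟨hQ.mul hQ', by rw [mul_coeff_zero]; exact hQ0.mul hQ'0, ?_, ?_⟩
  · rw [hQ'.degree_mul]
    exact (degree_mul_le _ _).trans (add_le_add hPQ hPQ')
  · simp only [Polynomial.coe_mul]
    linear_combination (y * Q' : PowerSeries A) * hx + (P : PowerSeries A) * hy

theorem IsLimRep.exists_of_dvd (h : IsLimRep x P Q) (hQ' : Q'.Monic) (hQ'0 : IsUnit (Q'.coeff 0))
    (hdvd : Q ∣ Q') : ∃ P', IsLimRep x P' Q' := by
  obtain ⟨c, rfl⟩ := hdvd
  have hc : c.Monic := h.1.of_mul_monic_left hQ'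
  have hc0 : IsUnit (c.coeff 0) := by
    rw [mul_coeff_zero] at hQ'0
    exact isUnit_of_mul_isUnit_right hQ'0
  exact ⟨P * c, mul_one x ▸ h.mul ⟨hc, hc0, le_rfl, one_mul _⟩⟩

end LimRep

section Truncation

variable {A : Type*} [CommRing A] {d : ℕ}

theorem coeff_expand_contract (hd : d ≠ 0) (P : A[X]) (n : ℕ) :
    (expand A d (contract d P)).coeff n = if d ∣ n then P.coeff n else 0 := by
  rw [coeff_expand (Nat.pos_of_ne_zero hd)]
  split_ifs with hdn
  · rw [coeff_contract hd, Nat.div_mul_cancel hdn]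
  · rfl

theorem degree_expand_contract_le (hd : d ≠ 0) (P : A[X]) :
    (expand A d (contract d P)).degree ≤ P.degree := by
  refine (degree_le_iff_coeff_zero _ _).2 fun n hn => ?_
  rw [coeff_expand_contract hd, coeff_eq_zero_of_degree_lt hn, ite_self]

theorem coe_expand_contract (hd : d ≠ 0) (P : A[X]) :
    (expand A d (contract d P) : PowerSeries A) = truncDiv A d P := by
  ext n
  rw [truncDiv, PowerSeries.coeff_mk, Polynomial.coeff_coe, Polynomial.coeff_coe,
    coeff_expand_contract hd]

theorem truncDiv_mul_of_coeff_eq_zero (f : PowerSeries A) {g : PowerSeries A}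
    (hg : ∀ i, ¬ d ∣ i → PowerSeries.coeff i g = 0) :
    truncDiv A d (f * g) = truncDiv A d f * g := by
  ext n
  simp only [truncDiv, PowerSeries.coeff_mk, PowerSeries.coeff_mul]
  split_ifs with hn
  · refine Finset.sum_congr rfl fun ⟨i, j⟩ hij => ?_
    rw [Finset.HasAntidiagonal.mem_antidiagonal] at hij
    by_cases hi : d ∣ i
    · rw [if_pos hi]
    · have hj : ¬ d ∣ j := fun hj => hi ((Nat.dvd_add_left hj).1 (hij ▸ hn))
      rw [hg j hj, mul_zero, mul_zero]
  · refine (Finset.sum_eq_zero fun ⟨i, j⟩ hij => ?_).symm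
    rw [Finset.HasAntidiagonal.mem_antidiagonal] at hij
    by_cases hi : d ∣ i
    · have hj : ¬ d ∣ j := fun hj => hn (hij ▸ dvd_add hi hj)
      rw [hg j hj, mul_zero]
    · rw [if_neg hi, zero_mul]

theorem IsLimRep.truncDiv_expand {x : PowerSeries A} {P Q : A[X]} (hd : d ≠ 0) (h : IsLimRep x P (expand A d Q)) :
    IsLimRep (truncDiv A d x) (expand A d (contract d P)) (expand A d Q) := by
  obtain ⟨hQ, hQ0, hPQ, hx⟩ := h
  refine ⟨hQ, hQ0, (degree_expand_contract_le hd P).trans hPQ, ?_⟩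
  rw [coe_expand_contract hd, ← hx]
  refine (truncDiv_mul_of_coeff_eq_zero x fun i hi => ?_).symm
  rw [Polynomial.coeff_coe, coeff_expand (Nat.pos_of_ne_zero hd), if_neg hi]

end Truncation

noncomputable def binomialDenominators (A : Type*) [CommRing A] : Submonoid A[X] :=
  Submonoid.closure
    {Q | ∃ (b : ℕ) (u : Aˣ), b ≠ 0 ∧ Q = Polynomial.X ^ b - Polynomial.C (u : A)}

section Denominators

variable {A : Type*} [CommRing A]

theorem monic_of_mem_binomialDenominators {Q : A[X]} (hQ : Q ∈ binomialDenominators A) :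
    Q.Monic := by
  induction hQ using Submonoid.closure_induction with
  | mem Q hQ =>
    obtain ⟨b, u, hb, rfl⟩ := hQ
    exact monic_X_pow_sub_C _ hb
  | one => exact monic_one
  | mul Q R _ _ hQ hR => exact hQ.mul hR

theorem isUnit_coeff_zero_of_mem_binomialDenominators {Q : A[X]}
    (hQ : Q ∈ binomialDenominators A) : IsUnit (Q.coeff 0) := by
  induction hQ using Submonoid.closure_induction with
  | mem Q hQ =>
    obtain ⟨b, u, hb, rfl⟩ := hQ
    simp [Polynomial.coeff_X_pow, hb.symm]
  | one => simp
  | mul Q R _ _ hQ hR => simpa only [mul_coeff_zero] using hQ.mul hR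

theorem exists_dvd_expand_of_mem_binomialDenominators (d : ℕ) {Q : A[X]}
    (hQ : Q ∈ binomialDenominators A) : ∃ R ∈ binomialDenominators A, Q ∣ expand A d R := by
  induction hQ using Submonoid.closure_induction with
  | mem Q hQ =>
    obtain ⟨b, u, hb, rfl⟩ := hQ
    refine ⟨Polynomial.X ^ b - Polynomial.C ((u ^ d : Aˣ) : A),
      Submonoid.subset_closure ⟨b, u ^ d, hb, rfl⟩, ?_⟩
    rw [map_sub, map_pow, Polynomial.expand_X, Polynomial.expand_C, Units.val_pow_eq_pow_val,
      C_pow, ← pow_mul, pow_mul']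
    exact sub_dvd_pow_sub_pow _ _ d
  | one => exact ⟨1, one_mem _, by rw [map_one]⟩
  | mul Q Q' _ _ hQ hQ' =>
    obtain ⟨R, hR, hQR⟩ := hQ
    obtain ⟨R', hR', hQR'⟩ := hQ'
    exact ⟨R * R', mul_mem hR hR', by rw [map_mul]; exact mul_dvd_mul hQR hQR'⟩

theorem isLimRep_X_pow_mul_inverse {b : ℕ} (hb : b ≠ 0) (u : Aˣ) :
    IsLimRep (PowerSeries.X ^ b * Ring.inverse (PowerSeries.X ^ b - PowerSeries.C (u : A)))
      (Polynomial.X ^ b) (Polynomial.X ^ b - Polynomial.C (u : A)) := by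
  have hmem : Polynomial.X ^ b - Polynomial.C (u : A) ∈ binomialDenominators A :=
    Submonoid.subset_closure ⟨b, u, hb, rfl⟩
  refine ⟨monic_of_mem_binomialDenominators hmem,
    isUnit_coeff_zero_of_mem_binomialDenominators hmem, ?_, ?_⟩
  · nontriviality A
    rw [degree_X_pow_sub_C (Nat.pos_of_ne_zero hb)]
    exact degree_X_pow_le b
  · have hunit : IsUnit (PowerSeries.X ^ b - PowerSeries.C (u : A)) := by
      rw [PowerSeries.isUnit_iff_constantCoeff]
      simp [zero_pow hb]
    rw [Polynomial.coe_sub, Polynomial.coe_pow, Polynomial.coe_X, Polynomial.coe_C, mul_assoc,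
      Ring.inverse_mul_cancel _ hunit, mul_one]

theorem exists_isLimRep_of_mem_ratAlg {L : Aˣ} {x : PowerSeries A} (hx : x ∈ RatAlg A L) :
    ∃ P, ∃ Q ∈ binomialDenominators A, IsLimRep x P Q := by
  induction hx using Algebra.adjoin_induction with
  | mem x hx =>
    obtain ⟨a, b, hb, rfl⟩ := hx
    exact ⟨_, _, Submonoid.subset_closure ⟨b, L ^ a, by omega, rfl⟩,
      isLimRep_X_pow_mul_inverse (by omega) (L ^ a)⟩
  | algebraMap r =>
    refine ⟨Polynomial.C r, 1, one_mem _, monic_one, by simp, ?_, ?_⟩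
    · nontriviality A
      rw [degree_one]
      exact degree_C_le
    · rw [Polynomial.coe_one, mul_one, Polynomial.coe_C]; rfl
  | add x y _ _ hx hy =>
    obtain ⟨P, Q, hQ, hxPQ⟩ := hx
    obtain ⟨P', Q', hQ', hyPQ⟩ := hy
    exact ⟨_, _, mul_mem hQ hQ', hxPQ.add hyPQ⟩
  | mul x y _ _ hx hy =>
    obtain ⟨P, Q, hQ, hxPQ⟩ := hx
    obtain ⟨P', Q', hQ', hyPQ⟩ := hy
    exact ⟨_, _, mul_mem hQ hQ', hxPQ.mul hyPQ⟩

theorem exists_isLimRep_expand_of_mem_ratAlg {L : Aˣ} {x : PowerSeries A} (hx : x ∈ RatAlg A L)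
    {d : ℕ} (hd : d ≠ 0) : ∃ P Q, IsLimRep x P (expand A d Q) := by
  obtain ⟨P, Q, hQ, hxPQ⟩ := exists_isLimRep_of_mem_ratAlg hx
  obtain ⟨R, hR, hQR⟩ := exists_dvd_expand_of_mem_binomialDenominators d hQ
  have hRd : (expand A d R).Monic :=
    (monic_of_mem_binomialDenominators hR).expand (Nat.pos_of_ne_zero hd)
  obtain ⟨P', hP'⟩ := hxPQ.exists_of_dvd hRd (by
    rw [coeff_expand (Nat.pos_of_ne_zero hd), if_pos (dvd_zero d), Nat.zero_div]
    exact isUnit_coeff_zero_of_mem_binomialDenominators hR) hQR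
  exact ⟨P', R, hP'⟩

end Denominators

/-- `lim_{T→∞} ∘ φ_d = lim_{T→∞}` on 𝓡: if `x ∈ 𝓡` has a
lim-representation `(P, Q)`, then `x[d]` has a lim-representation `(P₁, Q₁)` with the
same limit value. -/
theorem stmt7 {A : Type*} [CommRing A] (L : Aˣ) (d : ℕ) (hd : 1 ≤ d)
    (x : PowerSeries A) (hx : x ∈ RatAlg A L)
    (P Q : Polynomial A) (hPQ : IsLimRep x P Q) :
    ∃ P₁ Q₁ : Polynomial A, IsLimRep (truncDiv A d x) P₁ Q₁ ∧
      P₁.coeff Q₁.natDegree = P.coeff Q.natDegree := by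
  have hd₀ : d ≠ 0 := Nat.one_le_iff_ne_zero.mp hd
  obtain ⟨P', R, hP'R⟩ := exists_isLimRep_expand_of_mem_ratAlg hx hd₀
  refine ⟨_, _, hP'R.truncDiv_expand hd₀, ?_⟩
  rw [coeff_expand_contract hd₀, if_pos (natDegree_expand d R ▸ dvd_mul_left d _)]
  exact hP'R.coeff_natDegree_eq hPQ
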